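/- arXiv:2605.02176 — 2 statements merged into one kernel-verified Lean document; each statement's English description precedes it below -/
import Mathlib

section
/- Let $E \subset \mathbb{R}^d$ be a Borel set, $R > 0$, and $\alpha > 0$. There exists a constant $\vartheta > 0$ depending only on $d$ such that if $|E \cap B_R| \le \vartheta \alpha |B_R|$, then the set $D_\alpha = \{ x \in B_{R/4} : |E \cap B_r(x)| \le \alpha |B_r| \text{ for all } r \in (0, R/2] \}$ has Lebesgue measure at least $\frac{1}{2} |B_{R/4}|$. -/
open MeasureTheory Metric Filter Topology
open scoped ENNReal

noncomputable def tchi {d : ℕ} (E : Set (EuclideanSpace ℝ (Fin d))) (y : EuclideanSpace ℝ (Fin d)) : ℝ :=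
  Set.indicator Eᶜ (fun _ => (1:ℝ)) y - Set.indicator E (fun _ => (1:ℝ)) y

noncomputable def curvInt {d : ℕ} (K : EuclideanSpace ℝ (Fin d) → ℝ)
    (E : Set (EuclideanSpace ℝ (Fin d))) (x : EuclideanSpace ℝ (Fin d)) (ε : ℝ) : ℝ :=
  ∫ y in (ball x ε)ᶜ, tchi E y * K (x - y)

/-- The principal-value nonlocal mean curvature of `E` at `x` exists and equals `L ∈ [-∞,∞]`. -/
def HasCurvE {d : ℕ} (K : EuclideanSpace ℝ (Fin d) → ℝ) (E : Set (EuclideanSpace ℝ (Fin d)))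
    (x : EuclideanSpace ℝ (Fin d)) (L : EReal) : Prop :=
  Tendsto (fun ε => ((curvInt K E x ε : ℝ) : EReal)) (𝓝[>] (0:ℝ)) (𝓝 L)

/-- `λ |y|^{-(d+s)} ≤ K(y) ≤ Λ |y|^{-(d+s)}`. -/
def KernelBounds {d : ℕ} (K : EuclideanSpace ℝ (Fin d) → ℝ) (s lam Lam : ℝ) : Prop :=
  ∀ y : EuclideanSpace ℝ (Fin d), y ≠ 0 →
    lam * ‖y‖ ^ (-((d:ℝ) + s)) ≤ K y ∧ K y ≤ Lam * ‖y‖ ^ (-((d:ℝ) + s))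

/-- `E` is touched at `x` by an exterior ball. -/
def ExtBall {d : ℕ} (E : Set (EuclideanSpace ℝ (Fin d))) (x : EuclideanSpace ℝ (Fin d)) : Prop :=
  ∃ z ρ, 0 < ρ ∧ ball z ρ ⊆ Eᶜ ∧ x ∈ sphere z ρ

/-- `curv_{K,E} ≤ C₀` in `Ω` in the viscosity sense. -/
def ViscSubsol {d : ℕ} (K : EuclideanSpace ℝ (Fin d) → ℝ) (E : Set (EuclideanSpace ℝ (Fin d)))
    (Ω : Set (EuclideanSpace ℝ (Fin d))) (C₀ : ℝ) : Prop :=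
  ∀ x ∈ frontier E ∩ Ω, ExtBall E x → ∀ L : EReal, HasCurvE K E x L → L ≤ (C₀ : EReal)

/-- `curv_{K,E} ≥ C₀` in `Ω` in the viscosity sense. -/
def ViscSupersol {d : ℕ} (K : EuclideanSpace ℝ (Fin d) → ℝ) (E : Set (EuclideanSpace ℝ (Fin d)))
    (Ω : Set (EuclideanSpace ℝ (Fin d))) (C₀ : ℝ) : Prop :=
  ∀ x ∈ frontier E ∩ Ω, (∃ z ρ, 0 < ρ ∧ ball z ρ ⊆ E ∧ x ∈ sphere z ρ) →
    ∀ L : EReal, HasCurvE K E x L → (C₀ : EReal) ≤ L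

private lemma vitali_aux (d : ℕ) (E : Set (EuclideanSpace ℝ (Fin d))) (hE : MeasurableSet E)
    (R α : ℝ) (hR : 0 < R) (hα : 0 < α)
    (hsmall : volume (E ∩ ball (0 : EuclideanSpace ℝ (Fin d)) R) ≤
        ENNReal.ofReal (((2 * 16 ^ d : ℝ))⁻¹ * α) * volume (ball (0 : EuclideanSpace ℝ (Fin d)) R)) :
    volume (ball (0 : EuclideanSpace ℝ (Fin d)) (R / 4)) / 2 ≤
        volume {x ∈ ball (0 : EuclideanSpace ℝ (Fin d)) (R / 4) |
          ∀ r ∈ Set.Ioc (0 : ℝ) (R / 2),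
            volume (E ∩ ball x r) ≤ ENNReal.ofReal α * volume (ball x r)} := by
  classical
  set θ : ℝ := ((2 * 16 ^ d : ℝ))⁻¹ with hθdef
  have hθpos : 0 < θ := by positivity
  set Bad : Set (EuclideanSpace ℝ (Fin d)) := {x ∈ ball (0 : EuclideanSpace ℝ (Fin d)) (R / 4) |
    ∃ r ∈ Set.Ioc (0 : ℝ) (R / 2),
      ¬ volume (E ∩ ball x r) ≤ ENNReal.ofReal α * volume (ball x r)} with hBad
  have hex : ∀ a ∈ Bad, ∃ r : ℝ, r ∈ Set.Ioc (0 : ℝ) (R / 2) ∧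
      ENNReal.ofReal α * volume (ball a r) ≤ volume (E ∩ ball a r) := by
    intro a ha
    obtain ⟨-, r, hr, hgt⟩ := ha
    exact ⟨r, hr, (not_le.mp hgt).le⟩
  choose! r hr hrE using hex
  obtain ⟨u, huBad, hdisj, hcov⟩ :=
    Vitali.exists_disjoint_subfamily_covering_enlargement_closedBall Bad (fun a => a) r (R / 2)
      (fun a ha => (hr a ha).2) 4 (by norm_num)
  have hrpos : ∀ b ∈ u, 0 < r b := fun b hb => (hr b (huBad hb)).1
  have hucnt : u.Countable := by
    have := MeasureTheory.Measure.countable_meas_pos_of_disjoint_iUnion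
      (μ := (volume : Measure (EuclideanSpace ℝ (Fin d))))
      (As := fun b : u => closedBall (b : EuclideanSpace ℝ (Fin d)) (r b))
      (fun b => measurableSet_closedBall)
      (fun i j hij => hdisj i.2 j.2 (Subtype.coe_injective.ne hij))
    have huniv : {i : u | 0 < volume (closedBall (i : EuclideanSpace ℝ (Fin d)) (r i))}
        = Set.univ := by
      ext i
      simp only [Set.mem_setOf_eq, Set.mem_univ, iff_true]
      exact lt_of_lt_of_le (measure_ball_pos _ _ (hrpos i i.2))
        (measure_mono ball_subset_closedBall)
    rw [huniv, Set.countable_univ_iff] at this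
    exact Set.countable_coe_iff.mp this
  have : Countable ↥u := hucnt.to_subtype
  set n := Module.finrank ℝ (EuclideanSpace ℝ (Fin d)) with hn
  have hsubR : ∀ b ∈ u, ball (b : EuclideanSpace ℝ (Fin d)) (r b) ⊆
      ball (0 : EuclideanSpace ℝ (Fin d)) R := by
    intro b hb y hy
    have hb4 : dist b (0 : EuclideanSpace ℝ (Fin d)) < R / 4 := mem_ball.mp (huBad hb).1
    have ht : dist y (0 : EuclideanSpace ℝ (Fin d)) ≤ dist y b + dist b 0 := dist_triangle _ _ _
    have h2 : dist y b < r b := mem_ball.mp hy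
    have := (hr b (huBad hb)).2
    simp only [mem_ball]
    linarith
  have hBadsub : Bad ⊆ ⋃ b : u, closedBall (b : EuclideanSpace ℝ (Fin d)) (4 * r b) := by
    intro a ha
    obtain ⟨b, hb, hsub⟩ := hcov a ha
    exact Set.mem_iUnion.mpr ⟨⟨b, hb⟩, hsub (mem_closedBall_self (hr a ha).1.le)⟩
  have hvol4 : ∀ b ∈ u, volume (closedBall (b : EuclideanSpace ℝ (Fin d)) (4 * r b)) =
      ENNReal.ofReal ((4:ℝ) ^ n) * volume (ball (b : EuclideanSpace ℝ (Fin d)) (r b)) := by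
    intro b hb
    have h4 : (0:ℝ) ≤ 4 * r b := by have := hrpos b hb; linarith
    rw [Measure.addHaar_closedBall _ _ h4,
      Measure.addHaar_ball_of_pos _ _ (hrpos b hb), mul_pow,
      ENNReal.ofReal_mul (by positivity), mul_assoc]
  have hball : volume (ball (0 : EuclideanSpace ℝ (Fin d)) R) =
      ENNReal.ofReal ((4:ℝ) ^ n) * volume (ball (0 : EuclideanSpace ℝ (Fin d)) (R / 4)) := by
    have h := Measure.addHaar_ball_mul_of_pos (volume : Measure (EuclideanSpace ℝ (Fin d)))
      (0 : EuclideanSpace ℝ (Fin d)) (by norm_num : (0:ℝ) < 4) (R / 4)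
    rw [← h]
    congr 1
    ring_nf
  have hsixteen : ENNReal.ofReal ((16:ℝ) ^ n) =
      ENNReal.ofReal ((4:ℝ) ^ n) * ENNReal.ofReal ((4:ℝ) ^ n) := by
    rw [← ENNReal.ofReal_mul (by positivity)]
    congr 1
    rw [show (16:ℝ) = 4 * 4 by norm_num, mul_pow]
  have key : ENNReal.ofReal α * volume Bad ≤
      ENNReal.ofReal α * (ENNReal.ofReal ((16:ℝ) ^ n * θ) *
        volume (ball (0 : EuclideanSpace ℝ (Fin d)) (R / 4))) := by
    calc ENNReal.ofReal α * volume Bad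
        ≤ ENNReal.ofReal α *
            ∑' b : u, volume (closedBall (b : EuclideanSpace ℝ (Fin d)) (4 * r b)) := by
          gcongr
          exact (measure_mono hBadsub).trans (measure_iUnion_le _)
      _ = ENNReal.ofReal α * ∑' b : u, ENNReal.ofReal ((4:ℝ) ^ n) *
            volume (ball (b : EuclideanSpace ℝ (Fin d)) (r b)) := by
          congr 1
          exact tsum_congr fun b => hvol4 b b.2
      _ = ENNReal.ofReal ((4:ℝ) ^ n) * ∑' b : u, ENNReal.ofReal α *
            volume (ball (b : EuclideanSpace ℝ (Fin d)) (r b)) := by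
          rw [ENNReal.tsum_mul_left, ENNReal.tsum_mul_left, ← mul_assoc, ← mul_assoc,
            mul_comm (ENNReal.ofReal α)]
      _ ≤ ENNReal.ofReal ((4:ℝ) ^ n) *
            ∑' b : u, volume (E ∩ ball (b : EuclideanSpace ℝ (Fin d)) (r b)) := by
          gcongr with b
          exact hrE b (huBad b.2)
      _ = ENNReal.ofReal ((4:ℝ) ^ n) *
            volume (⋃ b : u, E ∩ ball (b : EuclideanSpace ℝ (Fin d)) (r b)) := by
          congr 1
          refine (measure_iUnion ?_ (fun b => hE.inter measurableSet_ball)).symm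
          intro i j hij
          exact ((hdisj i.2 j.2 (Subtype.coe_injective.ne hij)).mono
            (Set.inter_subset_right.trans ball_subset_closedBall)
            (Set.inter_subset_right.trans ball_subset_closedBall))
      _ ≤ ENNReal.ofReal ((4:ℝ) ^ n) * volume (E ∩ ball (0 : EuclideanSpace ℝ (Fin d)) R) := by
          gcongr
          exact Set.iUnion_subset fun b => Set.inter_subset_inter_right _ (hsubR b b.2)
      _ ≤ ENNReal.ofReal ((4:ℝ) ^ n) * (ENNReal.ofReal (θ * α) *
            volume (ball (0 : EuclideanSpace ℝ (Fin d)) R)) := by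
          gcongr
      _ = ENNReal.ofReal α * (ENNReal.ofReal ((16:ℝ) ^ n * θ) *
            volume (ball (0 : EuclideanSpace ℝ (Fin d)) (R / 4))) := by
          rw [hball, ENNReal.ofReal_mul hθpos.le,
            ENNReal.ofReal_mul (by positivity : (0:ℝ) ≤ (16:ℝ) ^ n), hsixteen]
          ring_nf
  have hcancel : volume Bad ≤ ENNReal.ofReal ((16:ℝ) ^ n * θ) *
      volume (ball (0 : EuclideanSpace ℝ (Fin d)) (R / 4)) :=
    (ENNReal.mul_le_mul_iff_right (by simp [hα]) ENNReal.ofReal_ne_top).mp key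
  have hhalf : ENNReal.ofReal ((16:ℝ) ^ n * θ) = ((2:ℝ≥0∞))⁻¹ := by
    have hn' : n = d := by simp [hn]
    rw [hn', hθdef, show ((16:ℝ) ^ d * (2 * 16 ^ d)⁻¹) = (2:ℝ)⁻¹ by
      field_simp]
    rw [ENNReal.ofReal_inv_of_pos (by norm_num)]
    norm_num
  have hBadhalf : volume Bad ≤ volume (ball (0 : EuclideanSpace ℝ (Fin d)) (R / 4)) / 2 := by
    rw [hhalf] at hcancel
    rwa [ENNReal.div_eq_inv_mul]
  set D := {x ∈ ball (0 : EuclideanSpace ℝ (Fin d)) (R / 4) |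
      ∀ r ∈ Set.Ioc (0 : ℝ) (R / 2),
        volume (E ∩ ball x r) ≤ ENNReal.ofReal α * volume (ball x r)} with hD
  have hcover : ball (0 : EuclideanSpace ℝ (Fin d)) (R / 4) ⊆ D ∪ Bad := by
    intro x hx
    by_cases h : ∀ r ∈ Set.Ioc (0 : ℝ) (R / 2),
        volume (E ∩ ball x r) ≤ ENNReal.ofReal α * volume (ball x r)
    · exact Or.inl ⟨hx, h⟩
    · push_neg at h
      obtain ⟨r, hr1, hr2⟩ := h
      exact Or.inr ⟨hx, r, hr1, not_le.mpr hr2⟩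
  have hfin : volume (ball (0 : EuclideanSpace ℝ (Fin d)) (R / 4)) / 2 ≠ ⊤ :=
    (ENNReal.div_lt_top measure_ball_lt_top.ne (by norm_num)).ne
  have h1 : volume (ball (0 : EuclideanSpace ℝ (Fin d)) (R / 4)) ≤ volume D + volume Bad :=
    (measure_mono hcover).trans (measure_union_le _ _)
  have h2 : volume (ball (0 : EuclideanSpace ℝ (Fin d)) (R / 4)) / 2 +
      volume (ball (0 : EuclideanSpace ℝ (Fin d)) (R / 4)) / 2
      ≤ volume D + volume (ball (0 : EuclideanSpace ℝ (Fin d)) (R / 4)) / 2 := by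
    rw [ENNReal.add_halves]
    exact h1.trans (by gcongr)
  exact ENNReal.le_of_add_le_add_right hfin h2


theorem stmt_0 (d : ℕ) :
    ∃ θ : ℝ, 0 < θ ∧
      ∀ (E : Set (EuclideanSpace ℝ (Fin d))), MeasurableSet E →
      ∀ R α : ℝ, 0 < R → 0 < α →
      volume (E ∩ ball (0 : EuclideanSpace ℝ (Fin d)) R) ≤
        ENNReal.ofReal (θ * α) * volume (ball (0 : EuclideanSpace ℝ (Fin d)) R) →
      volume (ball (0 : EuclideanSpace ℝ (Fin d)) (R / 4)) / 2 ≤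
        volume {x ∈ ball (0 : EuclideanSpace ℝ (Fin d)) (R / 4) |
          ∀ r ∈ Set.Ioc (0 : ℝ) (R / 2),
            volume (E ∩ ball x r) ≤ ENNReal.ofReal α * volume (ball x r)} := by
  exact ⟨((2 * 16 ^ d : ℝ))⁻¹, by positivity,
    fun E hE R α hR hα hsmall => vitali_aux d E hE R α hR hα hsmall⟩
end

section
/- Let $K : \mathbb{R}^d \to \mathbb{R}$ satisfy $\lambda |y|^{-(d+s)} \le K(y) \le \Lambda |y|^{-(d+s)}$ with $0 < \lambda \le \Lambda$ and $s \in (0,1)$. Let $E \subset \mathbb{R}^d$ be a Borel set and $x \in \partial E$. Then there exist constants $C, \gamma > 0$, depending only on $d$, $s$, $\lambda$, and $\Lambda$, such that if $|E \cap B_r(x)| \le \gamma |B_r|$ for some $r > 0$, then $\int_{B_r(x) \setminus B_{r/2}(x)} \tilde\chi_E(y) K(x-y)\, dy \ge C r^{-s}$. -/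
open MeasureTheory Metric Filter Topology
open scoped ENNReal

/-!
On the annulus `A = B_r(x) \ B_{r/2}(x)` the kernel is comparable to `r^{-(d+s)}`: it is at least
`λ r^{-(d+s)}` and at most `Λ (r/2)^{-(d+s)}`. Hence the integral is at least
`λ r^{-(d+s)} |A| - (λ + 2^{d+s} Λ) r^{-(d+s)} |E ∩ A|`. Since `|A| = (1 - 2^{-d}) |B_r|` while
`|E ∩ A| ≤ γ |B_r|`, a small enough `γ` leaves half of the first term, which is of order
`r^{-s}`.
In dimension `0` the annulus is empty, but so is the frontier of every set.
-/

section Annulus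

variable {F : Type*} [NormedAddCommGroup F] [NormedSpace ℝ F] [MeasurableSpace F] [BorelSpace F]
  [FiniteDimensional ℝ F] (μ : Measure F) [μ.IsAddHaarMeasure]

theorem addHaar_real_ball_of_pos (x : F) {r : ℝ} (hr : 0 < r) :
    μ.real (ball x r) = r ^ Module.finrank ℝ F * μ.real (ball 0 1) := by
  rw [measureReal_def, Measure.addHaar_ball_of_pos μ x hr, ENNReal.toReal_mul,
    ENNReal.toReal_ofReal (by positivity), measureReal_def]

theorem addHaar_real_ball_mul_rpow_neg (x : F) {r : ℝ} (hr : 0 < r) (s : ℝ) :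
    μ.real (ball x r) * r ^ (-((Module.finrank ℝ F : ℝ) + s)) =
      μ.real (ball 0 1) * r ^ (-s) := by
  rw [addHaar_real_ball_of_pos μ x hr, ← Real.rpow_natCast, mul_right_comm, ← Real.rpow_add hr,
    mul_comm]
  congr 2
  ring

theorem addHaar_real_ball_diff_ball_half (x : F) {r : ℝ} (hr : 0 < r) :
    μ.real (ball x r \ ball x (r / 2)) =
      (1 - 2⁻¹ ^ Module.finrank ℝ F) * μ.real (ball (0 : F) r) := by
  rw [measureReal_sdiff (ball_subset_ball (by linarith)) measurableSet_ball measure_ball_lt_top.ne,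
    addHaar_real_ball_of_pos μ x hr, addHaar_real_ball_of_pos μ x (half_pos hr),
    addHaar_real_ball_of_pos μ 0 hr, div_eq_mul_inv, mul_pow]
  ring

end Annulus

section Tchi

variable {d : ℕ} {E : Set (EuclideanSpace ℝ (Fin d))} {y : EuclideanSpace ℝ (Fin d)}

theorem tchi_of_mem (hy : y ∈ E) : tchi E y = -1 := by
  simp [tchi, hy]

theorem tchi_of_notMem (hy : y ∉ E) : tchi E y = 1 := by
  simp [tchi, hy]

theorem measurable_tchi (hE : MeasurableSet E) : Measurable (tchi E) :=
  (measurable_const.indicator hE.compl).sub (measurable_const.indicator hE)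

theorem norm_tchi_le_one : ‖tchi E y‖ ≤ 1 := by
  by_cases hy : y ∈ E <;> simp [tchi_of_mem, tchi_of_notMem, hy]

theorem sub_mul_measureReal_le_setIntegral_tchi_mul {μ : Measure (EuclideanSpace ℝ (Fin d))}
    {A : Set (EuclideanSpace ℝ (Fin d))} {g : EuclideanSpace ℝ (Fin d) → ℝ} {a b : ℝ}
    (hE : MeasurableSet E) (hA : MeasurableSet A) (hAμ : μ A ≠ ⊤) (hg : Measurable g)
    (hga : ∀ y ∈ A, a ≤ g y) (hgb : ∀ y ∈ A, g y ≤ b) :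
    a * μ.real A - (a + b) * μ.real (E ∩ A) ≤ ∫ y in A, tchi E y * g y ∂μ := by
  have hg_int : IntegrableOn g A μ := by
    refine Measure.integrableOn_of_bounded hAμ hg.aestronglyMeasurable (M := max |a| |b|) ?_
    filter_upwards [ae_restrict_mem hA] with y hy
    exact abs_le_max_abs_abs (hga y hy) (hgb y hy)
  have hconst (C : ℝ) : IntegrableOn (fun _ => C) A μ := integrableOn_const hAμ (by simp)
  have hind : IntegrableOn (E.indicator 1) A μ := (hconst 1).indicator hE
  have hlower_int : IntegrableOn (fun y => a - (a + b) * E.indicator 1 y) A μ :=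
    (hconst a).sub (hind.const_mul _)
  have hlower : ∫ y in A, a - (a + b) * E.indicator 1 y ∂μ =
      a * μ.real A - (a + b) * μ.real (E ∩ A) := by
    rw [integral_sub (hconst a) (hind.const_mul _), integral_const_mul, setIntegral_indicator hE]
    simp [Set.inter_comm, mul_comm]
  rw [← hlower]
  refine setIntegral_mono_on hlower_int
    (hg_int.bdd_mul (measurable_tchi hE).aestronglyMeasurable
      (Eventually.of_forall fun _ => norm_tchi_le_one)) hA fun y hy => ?_
  by_cases hyE : y ∈ E
  · simp only [tchi_of_mem hyE, Set.indicator_of_mem hyE, Pi.one_apply]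
    linarith [hgb y hy]
  · simp only [tchi_of_notMem hyE, Set.indicator_of_notMem hyE]
    linarith [hga y hy]

end Tchi

namespace KernelBounds

variable {d : ℕ} {K : EuclideanSpace ℝ (Fin d) → ℝ} {s lam Lam : ℝ}
  {y : EuclideanSpace ℝ (Fin d)}

theorem mul_rpow_le_of_norm_le (hK : KernelBounds K s lam Lam) (hds : 0 ≤ d + s)
    (hlam : 0 ≤ lam) (hy : y ≠ 0) {r : ℝ} (hyr : ‖y‖ ≤ r) :
    lam * r ^ (-((d : ℝ) + s)) ≤ K y :=
  (mul_le_mul_of_nonneg_left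
    (Real.rpow_le_rpow_of_nonpos (norm_pos_iff.2 hy) hyr (neg_nonpos.2 hds)) hlam).trans (hK y hy).1

theorem le_mul_rpow_of_le_norm (hK : KernelBounds K s lam Lam) (hds : 0 ≤ d + s)
    (hLam : 0 ≤ Lam) {ρ : ℝ} (hρ : 0 < ρ) (hy : ρ ≤ ‖y‖) :
    K y ≤ Lam * ρ ^ (-((d : ℝ) + s)) := by
  have hy0 : y ≠ 0 := norm_pos_iff.1 (hρ.trans_le hy)
  exact (hK y hy0).2.trans
    (mul_le_mul_of_nonneg_left (Real.rpow_le_rpow_of_nonpos hρ hy (neg_nonpos.2 hds)) hLam)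

theorem le_setIntegral_ball_diff_ball_half (hKm : Measurable K) (hK : KernelBounds K s lam Lam)
    (hds : 0 ≤ d + s) (hlam : 0 ≤ lam) (hLam : 0 ≤ Lam) {E : Set (EuclideanSpace ℝ (Fin d))}
    (hE : MeasurableSet E) (x : EuclideanSpace ℝ (Fin d)) {r : ℝ} (hr : 0 < r) :
    r ^ (-((d : ℝ) + s)) * (lam * volume.real (ball x r \ ball x (r / 2)) -
        (lam + Lam * 2 ^ ((d : ℝ) + s)) * volume.real (E ∩ (ball x r \ ball x (r / 2)))) ≤
      ∫ y in ball x r \ ball x (r / 2), tchi E y * K (x - y) := by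
  have hnorm : ∀ y ∈ ball x r \ ball x (r / 2), r / 2 ≤ ‖x - y‖ ∧ ‖x - y‖ < r :=
    fun y hy => ⟨not_lt.1 (mt mem_ball_iff_norm'.2 hy.2), mem_ball_iff_norm'.1 hy.1⟩
  have hhalf : (r / 2) ^ (-((d : ℝ) + s)) = 2 ^ ((d : ℝ) + s) * r ^ (-((d : ℝ) + s)) := by
    rw [Real.div_rpow hr.le zero_le_two, Real.rpow_neg zero_le_two, div_inv_eq_mul, mul_comm]
  convert sub_mul_measureReal_le_setIntegral_tchi_mul (μ := volume) (g := fun y => K (x - y)) hE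
    (measurableSet_ball.diff measurableSet_ball)
    ((measure_mono Set.sdiff_subset).trans_lt measure_ball_lt_top).ne
    (hKm.comp (measurable_const.sub measurable_id))
    (fun y hy => hK.mul_rpow_le_of_norm_le hds hlam
      (norm_pos_iff.1 ((half_pos hr).trans_le (hnorm y hy).1)) (hnorm y hy).2.le)
    (fun y hy => hK.le_mul_rpow_of_le_norm hds hLam (half_pos hr) (hnorm y hy).1) using 1
  rw [hhalf]
  ring

end KernelBounds

theorem stmt_8 (d : ℕ) (s lam Lam : ℝ) (hs : s ∈ Set.Ioo (0 : ℝ) 1)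
    (hlam : 0 < lam) (hLam : lam ≤ Lam) :
    ∃ C γ : ℝ, 0 < C ∧ 0 < γ ∧
      ∀ (K : EuclideanSpace ℝ (Fin d) → ℝ), Measurable K →
        KernelBounds K s lam Lam →
      ∀ (E : Set (EuclideanSpace ℝ (Fin d))), MeasurableSet E →
      ∀ x ∈ frontier E, ∀ r : ℝ, 0 < r →
        volume (E ∩ ball x r) ≤
          ENNReal.ofReal γ * volume (ball (0 : EuclideanSpace ℝ (Fin d)) r) →
        C * r ^ (-s) ≤ ∫ y in ball x r \ ball x (r / 2), tchi E y * K (x - y) := by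
  obtain rfl | hd := Nat.eq_zero_or_pos d
  · refine ⟨1, 1, one_pos, one_pos, fun K _ _ E _ x hx => ?_⟩
    rw [(isClopen_discrete E).frontier_eq] at hx
    exact hx.elim
  have hc : 0 < 1 - (2⁻¹ : ℝ) ^ d :=
    sub_pos.2 (pow_lt_one₀ (by norm_num) (by norm_num) hd.ne')
  have hω : 0 < volume.real (ball (0 : EuclideanSpace ℝ (Fin d)) 1) :=
    ENNReal.toReal_pos (measure_ball_pos _ _ one_pos).ne' measure_ball_lt_top.ne
  have hM : 0 < lam + Lam * 2 ^ ((d : ℝ) + s) := by positivity [hlam.trans_le hLam]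
  set c := 1 - (2⁻¹ : ℝ) ^ d
  set ω := volume.real (ball (0 : EuclideanSpace ℝ (Fin d)) 1)
  set M := lam + Lam * 2 ^ ((d : ℝ) + s)
  have hγ : 0 < lam * c / (2 * M) := by positivity
  set γ := lam * c / (2 * M)
  refine ⟨lam * c * ω / 2, γ, by positivity, hγ, ?_⟩
  intro K hK hKB E hE x _ r hr hvol
  have hlower := hKB.le_setIntegral_ball_diff_ball_half hK (by positivity [hs.1.le]) hlam.le
    (hlam.le.trans hLam) hE x hr
  have hA := addHaar_real_ball_diff_ball_half volume x hr
  have hVt := addHaar_real_ball_mul_rpow_neg volume (0 : EuclideanSpace ℝ (Fin d)) hr s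
  rw [finrank_euclideanSpace_fin] at hA hVt
  set A := ball x r \ ball x (r / 2)
  set V := volume.real (ball (0 : EuclideanSpace ℝ (Fin d)) r)
  set t := r ^ (-((d : ℝ) + s))
  have hEA : volume.real (E ∩ A) ≤ γ * V := by
    refine ENNReal.toReal_le_of_le_ofReal (by positivity) ?_
    rw [ENNReal.ofReal_mul hγ.le, ofReal_measureReal measure_ball_lt_top.ne]
    exact (measure_mono (Set.inter_subset_inter_right E Set.sdiff_subset)).trans hvol
  have hMγ : M * γ = lam * c / 2 := by simp only [γ]; field_simp
  calc lam * c * ω / 2 * r ^ (-s)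
      = t * (lam * (c * V) - M * (γ * V)) := by
        linear_combination (-(lam * c / 2)) * hVt + t * V * hMγ
    _ ≤ t * (lam * (c * V) - M * volume.real (E ∩ A)) := by gcongr
    _ ≤ _ := hA ▸ hlower
end
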